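/- Gauge invariance of the error curve: let Z_Λ(t) = exp(−i Λ(t) σ_z/2) for a C¹ function Λ, and define Ũ(t) = Z_{Λ(t)} U₀(t) Z_{−Λ(0)}. Then Ũ is generated by a Hamiltonian of the same form with Φ̃ = Φ + Λ and Δ̃ = Δ + Λ', and the new error curve r̃(t) (defined via Ũ in place of U₀) is obtained from r(t) by a fixed rotation: r̃(t) = R r(t) for all t, where R ∈ SO(3) is the rotation about the z axis by angle Λ(0). -/

import Mathlib

open intervalIntegral Matrix Complex

/-!
Conjugation by `Z_φ = exp(-iφσz/2)` acts on Pauli vectors `v · σ` as the rotation `R_z(φ)`.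
Hence `Z_Λ H₀ Z_Λ†` is `H₀` with `Φ` shifted by `Λ`, and the product rule adds `i Ż_Λ Z_Λ† =
(Λ'/2) σz`, which shifts `Δ` by `Λ'`. Since `Z_Λ(t)` commutes with `σz`, the integrand of the new
error curve is `Ũ†σzŨ = Z_{Λ(0)} (U₀†σzU₀) Z_{Λ(0)}†`, i.e. the old integrand rotated by the fixed
`R_z(Λ(0))`, and integration commutes with this linear map.
-/

/-- Pauli matrices. -/
def σx : Matrix (Fin 2) (Fin 2) ℂ := !![0, 1; 1, 0]
def σy : Matrix (Fin 2) (Fin 2) ℂ := !![0, -Complex.I; Complex.I, 0]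
def σz : Matrix (Fin 2) (Fin 2) ℂ := !![1, 0; 0, -1]

/-- The control Hamiltonian
`H₀(t) = (Ω/2)(cosΦ σx + sinΦ σy) + (Δ/2) σz`. -/
noncomputable def H0 (Ω Φ Δ : ℝ → ℝ) (t : ℝ) : Matrix (Fin 2) (Fin 2) ℂ :=
  (Ω t / 2) • (Real.cos (Φ t) • σx + Real.sin (Φ t) • σy) + (Δ t / 2) • σz

/-- `Z_Λ = exp(−i Λ σz/2)`, written explicitly as a diagonal matrix. -/
noncomputable def Zgate (φ : ℝ) : Matrix (Fin 2) (Fin 2) ℂ :=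
  !![Complex.exp (-Complex.I * φ / 2), 0; 0, Complex.exp (Complex.I * φ / 2)]

section MatrixDeriv

variable {𝕜 R : Type*} [NontriviallyNormedField 𝕜] [NormedCommRing R] [NormedAlgebra 𝕜 R]
  {l m n : Type*}

/-- Entrywise derivative: `Matrix` carries no global norm. -/
def HasMatrixDerivAt (A : 𝕜 → Matrix m n R) (A' : Matrix m n R) (t : 𝕜) : Prop :=
  ∀ i j, HasDerivAt (fun s => A s i j) (A' i j) t

theorem hasMatrixDerivAt_const (A : Matrix m n R) (t : 𝕜) :
    HasMatrixDerivAt (fun _ => A) 0 t :=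
  fun _ _ => hasDerivAt_const t _

theorem HasMatrixDerivAt.mul [Fintype m] {A : 𝕜 → Matrix l m R} {B : 𝕜 → Matrix m n R}
    {A' : Matrix l m R} {B' : Matrix m n R} {t : 𝕜}
    (hA : HasMatrixDerivAt A A' t) (hB : HasMatrixDerivAt B B' t) :
    HasMatrixDerivAt (fun s => A s * B s) (A' * B t + A t * B') t := by
  intro i j
  simp only [Matrix.add_apply, Matrix.mul_apply, ← Finset.sum_add_distrib]
  exact HasDerivAt.fun_sum fun k _ => (hA i k).mul (hB k j)

end MatrixDeriv

theorem intervalIntegral_mulVec {m n : Type*} [Fintype m] [Fintype n] (A : Matrix m n ℝ)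
    {f : ℝ → n → ℝ} {a b : ℝ} (hf : IntervalIntegrable f MeasureTheory.volume a b) :
    ∫ t in a..b, A *ᵥ f t = A *ᵥ ∫ t in a..b, f t :=
  (LinearMap.toContinuousLinearMap A.mulVecLin).intervalIntegral_comp_comm hf

theorem Zgate_mul_Zgate (φ ψ : ℝ) : Zgate φ * Zgate ψ = Zgate (φ + ψ) := by
  simp only [Zgate, Matrix.mul_fin_two, mul_zero, zero_mul, add_zero, zero_add,
    ← Complex.exp_add, Complex.ofReal_add]
  congr 2 <;> ring_nf

theorem Zgate_zero : Zgate 0 = 1 := by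
  simp [Zgate, Matrix.one_fin_two]

theorem Zgate_conjTranspose (φ : ℝ) : (Zgate φ)ᴴ = Zgate (-φ) := by
  ext i j
  fin_cases i <;> fin_cases j <;> simp [Zgate, ← Complex.exp_conj, map_ofNat]

theorem Zgate_conjTranspose_mul_self (φ : ℝ) : (Zgate φ)ᴴ * Zgate φ = 1 := by
  rw [Zgate_conjTranspose, Zgate_mul_Zgate, neg_add_cancel, Zgate_zero]

theorem hasMatrixDerivAt_Zgate {Λ : ℝ → ℝ} {Λ' t : ℝ} (hΛ : HasDerivAt Λ Λ' t) :
    HasMatrixDerivAt (fun s => Zgate (Λ s)) (-I • ((Λ' / 2) • σz * Zgate (Λ t))) t := by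
  have hΛC := hΛ.ofReal_comp
  intro i j
  fin_cases i <;> fin_cases j
  · exact ((hΛC.const_mul (-I)).div_const 2).cexp.congr_deriv (by
      simp [Zgate, σz]; ring)
  · exact (hasDerivAt_const t (0 : ℂ)).congr_deriv (by simp [Zgate, σz])
  · exact (hasDerivAt_const t (0 : ℂ)).congr_deriv (by simp [Zgate, σz])
  · exact ((hΛC.const_mul I).div_const 2).cexp.congr_deriv (by
      simp [Zgate, σz]; ring)

theorem σz_mul_Zgate (φ : ℝ) : σz * Zgate φ = Zgate φ * σz := by
  simp [σz, Zgate]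

noncomputable def pauliVec (v : Fin 3 → ℝ) : Matrix (Fin 2) (Fin 2) ℂ :=
  v 0 • σx + v 1 • σy + v 2 • σz

noncomputable def rotZ (θ : ℝ) : Matrix (Fin 3) (Fin 3) ℝ :=
  !![Real.cos θ, -Real.sin θ, 0; Real.sin θ, Real.cos θ, 0; 0, 0, 1]

theorem rotZ_mulVec (θ : ℝ) (v : Fin 3 → ℝ) :
    rotZ θ *ᵥ v =
      ![Real.cos θ * v 0 - Real.sin θ * v 1, Real.sin θ * v 0 + Real.cos θ * v 1, v 2] := by
  ext i; fin_cases i <;> simp [rotZ, Matrix.mulVec, dotProduct, Fin.sum_univ_three]; ring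

theorem pauliVec_injective : Function.Injective pauliVec := by
  intro v w h
  have h00 : (v 2 : ℂ) = w 2 := by simpa [pauliVec, σx, σy, σz] using congrFun (congrFun h 0) 0
  have h01 : (v 0 : ℂ) - v 1 * I = w 0 - w 1 * I := by
    simpa [pauliVec, σx, σy, σz, sub_eq_add_neg] using congrFun (congrFun h 0) 1
  ext i; fin_cases i
  · simpa using congrArg Complex.re h01
  · simpa using congrArg Complex.im h01
  · exact_mod_cast h00

theorem Zgate_mul_pauliVec_mul_conjTranspose (θ : ℝ) (v : Fin 3 → ℝ) :
    Zgate θ * pauliVec v * (Zgate θ)ᴴ = pauliVec (rotZ θ *ᵥ v) := by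
  have hinv : cexp (-(I * θ) / 2) * cexp (I * θ / 2) = 1 := by
    rw [← Complex.exp_add, neg_div, neg_add_cancel, Complex.exp_zero]
  have hneg : cexp (-(I * θ) / 2) * cexp (-(I * θ) / 2) = cos θ - sin θ * I := by
    rw [← Complex.exp_add, show -(I * θ) / 2 + -(I * θ) / 2 = -θ * I by ring, Complex.exp_mul_I,
      Complex.cos_neg, Complex.sin_neg, neg_mul, sub_eq_add_neg]
  have hpos : cexp (I * θ / 2) * cexp (I * θ / 2) = cos θ + sin θ * I := by
    rw [← Complex.exp_add, ← Complex.exp_mul_I]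
    ring_nf
  rw [Zgate_conjTranspose, rotZ_mulVec]
  ext i j
  fin_cases i <;> fin_cases j <;>
    simp [Zgate, pauliVec, σx, σy, σz, Matrix.mul_apply, Fin.sum_univ_two]
  · linear_combination (v 2 : ℂ) * hinv
  · linear_combination ((v 0 : ℂ) - v 1 * I) * hneg + (v 1 : ℂ) * sin θ * I_sq
  · linear_combination ((v 0 : ℂ) + v 1 * I) * hpos + (v 1 : ℂ) * sin θ * I_sq
  · linear_combination (v 2 : ℂ) * hinv

theorem H0_eq_pauliVec (Ω Φ Δ : ℝ → ℝ) (t : ℝ) :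
    H0 Ω Φ Δ t = pauliVec ![Ω t / 2 * Real.cos (Φ t), Ω t / 2 * Real.sin (Φ t), Δ t / 2] := by
  simp only [H0, pauliVec, Matrix.cons_val_zero, Matrix.cons_val_one, Matrix.cons_val]
  module

theorem H0_add_detuning (Ω Φ Δ D : ℝ → ℝ) (t : ℝ) :
    H0 Ω Φ (fun u => Δ u + D u) t = H0 Ω Φ Δ t + (D t / 2) • σz := by
  simp only [H0, add_div, add_smul]
  abel

theorem Zgate_mul_H0_mul_conjTranspose (Ω Φ Δ Λ : ℝ → ℝ) (t : ℝ) :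
    Zgate (Λ t) * H0 Ω Φ Δ t * (Zgate (Λ t))ᴴ = H0 Ω (fun u => Φ u + Λ u) Δ t := by
  rw [H0_eq_pauliVec, H0_eq_pauliVec, Zgate_mul_pauliVec_mul_conjTranspose, rotZ_mulVec]
  congr 1
  ext i
  fin_cases i <;> simp [Real.cos_add, Real.sin_add] <;> ring

noncomputable def gaugeTransform (Λ : ℝ → ℝ) (U : ℝ → Matrix (Fin 2) (Fin 2) ℂ) (t : ℝ) :
    Matrix (Fin 2) (Fin 2) ℂ :=
  Zgate (Λ t) * U t * Zgate (-(Λ 0))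

theorem hasMatrixDerivAt_gaugeTransform {Ω Φ Δ Λ Λ' : ℝ → ℝ} {U : ℝ → Matrix (Fin 2) (Fin 2) ℂ}
    {t : ℝ} (hΛ : HasDerivAt Λ (Λ' t) t) (hU : HasMatrixDerivAt U (-I • (H0 Ω Φ Δ t * U t)) t) :
    HasMatrixDerivAt (gaugeTransform Λ U)
      (-I • (H0 Ω (fun u => Φ u + Λ u) (fun u => Δ u + Λ' u) t * gaugeTransform Λ U t)) t := by
  unfold gaugeTransform
  convert ((hasMatrixDerivAt_Zgate hΛ).mul hU).mul
    (hasMatrixDerivAt_const (Zgate (-(Λ 0))) t) using 1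
  rw [H0_add_detuning, ← Zgate_mul_H0_mul_conjTranspose]
  simp only [Matrix.add_mul, Matrix.smul_mul, Matrix.mul_smul, Matrix.mul_assoc, Matrix.mul_zero,
    add_zero]
  rw [← Matrix.mul_assoc (Zgate (Λ t))ᴴ, Zgate_conjTranspose_mul_self, Matrix.one_mul, smul_add,
    add_comm]

theorem gaugeTransform_conjTranspose_mul_σz_mul (Λ : ℝ → ℝ) (U : ℝ → Matrix (Fin 2) (Fin 2) ℂ)
    (t : ℝ) :
    (gaugeTransform Λ U t)ᴴ * σz * gaugeTransform Λ U t =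
      Zgate (Λ 0) * ((U t)ᴴ * σz * U t) * (Zgate (Λ 0))ᴴ := by
  have hσz : (Zgate (Λ t))ᴴ * σz * Zgate (Λ t) = σz := by
    rw [Matrix.mul_assoc, σz_mul_Zgate, ← Matrix.mul_assoc, Zgate_conjTranspose_mul_self,
      Matrix.one_mul]
  calc (gaugeTransform Λ U t)ᴴ * σz * gaugeTransform Λ U t
      = (Zgate (-(Λ 0)))ᴴ * ((U t)ᴴ * ((Zgate (Λ t))ᴴ * σz * Zgate (Λ t)) * U t) *
          Zgate (-(Λ 0)) := by
        simp only [gaugeTransform, Matrix.conjTranspose_mul, Matrix.mul_assoc]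
    _ = Zgate (Λ 0) * ((U t)ᴴ * σz * U t) * (Zgate (Λ 0))ᴴ := by
        rw [hσz, Zgate_conjTranspose, Zgate_conjTranspose, neg_neg]

theorem stmt_16_general (Ω Φ Δ Λ : ℝ → ℝ) (hΛ : ContDiff ℝ 1 Λ)
    (U0 : ℝ → Matrix (Fin 2) (Fin 2) ℂ)
    (hU0ode : ∀ (i j : Fin 2) (t : ℝ), HasDerivAt (fun t' => U0 t' i j)
      (((-Complex.I) • (H0 Ω Φ Δ t * U0 t)) i j) t)
    (Ut : ℝ → Matrix (Fin 2) (Fin 2) ℂ)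
    (hUt : ∀ t : ℝ, Ut t = Zgate (Λ t) * U0 t * Zgate (-(Λ 0)))
    (T Tt : ℝ → (Fin 3 → ℝ)) (hTcont : Continuous T)
    (hT : ∀ t : ℝ, (T t 0) • σx + (T t 1) • σy + (T t 2) • σz =
      (U0 t)ᴴ * σz * U0 t)
    (hTt : ∀ t : ℝ, (Tt t 0) • σx + (Tt t 1) • σy + (Tt t 2) • σz =
      (Ut t)ᴴ * σz * Ut t)
    (r rt : ℝ → (Fin 3 → ℝ))
    (hrdef : ∀ t : ℝ, r t = ∫ t' in (0:ℝ)..t, T t')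
    (hrtdef : ∀ t : ℝ, rt t = ∫ t' in (0:ℝ)..t, Tt t') :
    (∀ (i j : Fin 2) (t : ℝ), HasDerivAt (fun t' => Ut t' i j)
      (((-Complex.I) • (H0 Ω (fun u => Φ u + Λ u)
          (fun u => Δ u + deriv Λ u) t * Ut t)) i j) t) ∧
    (∀ t : ℝ, rt t =
      ![Real.cos (Λ 0) * r t 0 - Real.sin (Λ 0) * r t 1,
        Real.sin (Λ 0) * r t 0 + Real.cos (Λ 0) * r t 1,
        r t 2]) := by
  obtain rfl : Ut = gaugeTransform Λ U0 := funext hUt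
  have hTt_rot : ∀ u, Tt u = rotZ (Λ 0) *ᵥ T u := fun u => pauliVec_injective <|
    calc pauliVec (Tt u) = (gaugeTransform Λ U0 u)ᴴ * σz * gaugeTransform Λ U0 u := hTt u
      _ = Zgate (Λ 0) * pauliVec (T u) * (Zgate (Λ 0))ᴴ := by
        rw [gaugeTransform_conjTranspose_mul_σz_mul, ← hT u]; rfl
      _ = pauliVec (rotZ (Λ 0) *ᵥ T u) := Zgate_mul_pauliVec_mul_conjTranspose _ _
  refine ⟨fun i j t => ?_, fun t => ?_⟩
  · exact hasMatrixDerivAt_gaugeTransform (hΛ.differentiable one_ne_zero t).hasDerivAt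
      (fun i j => hU0ode i j t) i j
  · rw [hrtdef, hrdef, ← rotZ_mulVec, ← intervalIntegral_mulVec _ (hTcont.intervalIntegrable 0 t)]
    exact intervalIntegral.integral_congr fun u _ => hTt_rot u

/-- gauge invariance of the error curve. With
`Ũ(t) = Z_{Λ(t)} U₀(t) Z_{−Λ(0)}`, the evolution `Ũ` is generated by a
Hamiltonian of the same form with `Φ̃ = Φ + Λ`, `Δ̃ = Δ + Λ'`, and the new
error curve `r̃` equals the old one rotated about the z axis by the angle
`Λ(0)`. -/
theorem stmt_16 (Ω Φ Δ Λ : ℝ → ℝ) (hΩ : Continuous Ω) (hΦ : Continuous Φ)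
    (hΔ : Continuous Δ) (hΛ : ContDiff ℝ 1 Λ)
    (U0 : ℝ → Matrix (Fin 2) (Fin 2) ℂ) (hU00 : U0 0 = 1)
    (hU0unitary : ∀ t : ℝ, (U0 t)ᴴ * U0 t = 1)
    (hU0ode : ∀ (i j : Fin 2) (t : ℝ), HasDerivAt (fun t' => U0 t' i j)
      (((-Complex.I) • (H0 Ω Φ Δ t * U0 t)) i j) t)
    (Ut : ℝ → Matrix (Fin 2) (Fin 2) ℂ)
    (hUt : ∀ t : ℝ, Ut t = Zgate (Λ t) * U0 t * Zgate (-(Λ 0)))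
    (T Tt : ℝ → (Fin 3 → ℝ)) (hTcont : Continuous T) (hTtcont : Continuous Tt)
    (hT : ∀ t : ℝ, (T t 0) • σx + (T t 1) • σy + (T t 2) • σz =
      (U0 t)ᴴ * σz * U0 t)
    (hTt : ∀ t : ℝ, (Tt t 0) • σx + (Tt t 1) • σy + (Tt t 2) • σz =
      (Ut t)ᴴ * σz * Ut t)
    (r rt : ℝ → (Fin 3 → ℝ))
    (hrdef : ∀ t : ℝ, r t = ∫ t' in (0:ℝ)..t, T t')
    (hrtdef : ∀ t : ℝ, rt t = ∫ t' in (0:ℝ)..t, Tt t') :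
    (∀ (i j : Fin 2) (t : ℝ), HasDerivAt (fun t' => Ut t' i j)
      (((-Complex.I) • (H0 Ω (fun u => Φ u + Λ u)
          (fun u => Δ u + deriv Λ u) t * Ut t)) i j) t) ∧
    (∀ t : ℝ, rt t =
      ![Real.cos (Λ 0) * r t 0 - Real.sin (Λ 0) * r t 1,
        Real.sin (Λ 0) * r t 0 + Real.cos (Λ 0) * r t 1,
        r t 2]) :=
  stmt_16_general Ω Φ Δ Λ hΛ U0 hU0ode Ut hUt T Tt hTcont hT hTt r rt hrdef hrtdef
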